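/- With the setup of the previous statement (f_i supported on [a_i, a_{i+1}], with m-fold iterated integrals over [a_i, a_{i+1}] equal to h^{r+m} V_m), for every x ∈ (a_{i+1}, b] and every k ≥ 1, the k-fold iterated integral ∫_a^x ∫_a^{y_{k-1}} ⋯ ∫_a^{y_1} f_i(y_0) dy_0 ⋯ dy_{k-1} equals Σ_{m=1}^k (h^{r+m}/(k-m)!) V_m (x - a_{i+1})^{k-m}. -/

import Mathlib

noncomputable def iterInt (f : ℝ → ℝ) (a : ℝ) : ℕ → ℝ → ℝ
  | 0 => f
  | m + 1 => fun x => ∫ y in a..x, iterInt f a m y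

/-!
As `f` vanishes left of `a_i`, the iterated integrals from `a` agree with those from `a_i`.
Right of `a_{i+1}` the function `f` vanishes too, so there each further integration only integrates
a polynomial: the `k`-fold integral is the Taylor polynomial at `a_{i+1}` whose coefficients are the
iterated integrals at `a_{i+1}`, i.e. `h^{r+m} V_m`.
-/

open Set Nat

section

variable {f : ℝ → ℝ} {c d : ℝ}

lemma Continuous.eq_zero_of_le_of_forall_notMem_Icc (hf : Continuous f)
    (hsupp : ∀ x ∉ Icc c d, f x = 0) {y : ℝ} (hy : y ≤ c) : f y = 0 := by
  have h0 : EqOn f 0 (Iio c) := fun x hx => hsupp x fun hx' => not_le.2 hx hx'.1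
  exact h0.closure hf continuous_const (by rwa [closure_Iio])

lemma Continuous.eq_zero_of_ge_of_forall_notMem_Icc (hf : Continuous f)
    (hsupp : ∀ x ∉ Icc c d, f x = 0) {y : ℝ} (hy : d ≤ y) : f y = 0 := by
  have h0 : EqOn f 0 (Ioi d) := fun x hx => hsupp x fun hx' => not_le.2 hx hx'.2
  exact h0.closure hf continuous_const (by rwa [closure_Ioi])

lemma iterInt_succ_apply (m : ℕ) (x : ℝ) :
    iterInt f c (m + 1) x = ∫ y in c..x, iterInt f c m y := rfl

lemma continuous_iterInt (hf : Continuous f) (c : ℝ) : ∀ m, Continuous (iterInt f c m)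
  | 0 => hf
  | m + 1 => intervalIntegral.continuous_primitive
      (fun _ _ => (continuous_iterInt hf c m).intervalIntegrable _ _) c

lemma iterInt_eq_zero_of_le (h0 : ∀ y ≤ c, f y = 0) :
    ∀ m, ∀ y ≤ c, iterInt f c m y = 0
  | 0 => h0
  | m + 1 => fun y hy => by
    rw [iterInt_succ_apply, intervalIntegral.integral_congr (g := 0)
      fun t ht => iterInt_eq_zero_of_le h0 m t (uIcc_of_ge hy ▸ ht).2]
    simp

lemma iterInt_eq_iterInt_of_le (hf : Continuous f) {a : ℝ} (hac : a ≤ c)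
    (h0 : ∀ y ≤ c, f y = 0) : ∀ m, iterInt f a m = iterInt f c m
  | 0 => rfl
  | m + 1 => by
    funext x
    have hcont := continuous_iterInt hf c m
    have hzero : ∫ t in a..c, iterInt f c m t = 0 := by
      rw [intervalIntegral.integral_congr (g := 0)
        fun t ht => iterInt_eq_zero_of_le h0 m t (uIcc_of_le hac ▸ ht).2]
      simp
    rw [iterInt_succ_apply, iterInt_succ_apply, iterInt_eq_iterInt_of_le hf hac h0 m,
      ← intervalIntegral.integral_add_adjacent_intervals (hcont.intervalIntegrable a c)
        (hcont.intervalIntegrable c x), hzero, zero_add]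

lemma integral_sub_pow_div_factorial (d x : ℝ) (j : ℕ) :
    ∫ y in d..x, (y - d) ^ j / (j ! : ℝ) = (x - d) ^ (j + 1) / ((j + 1)! : ℝ) := by
  rw [intervalIntegral.integral_div, intervalIntegral.integral_comp_sub_right (· ^ j),
    integral_pow, factorial_succ]
  push_cast
  field_simp
  ring

lemma iterInt_eq_sum_of_ge (hf : Continuous f) (c : ℝ) (h0 : ∀ y, d ≤ y → f y = 0) :
    ∀ k, ∀ x, d ≤ x →
      iterInt f c k x = ∑ m ∈ Finset.Icc 1 k,
        iterInt f c m d * ((x - d) ^ (k - m) / ((k - m)! : ℝ))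
  | 0 => fun x hx => by simpa [iterInt] using h0 x hx
  | k + 1 => fun x hx => by
    have hcont := continuous_iterInt hf c k
    have htail : ∫ y in d..x, iterInt f c k y = ∑ m ∈ Finset.Icc 1 k,
        iterInt f c m d * ((x - d) ^ (k + 1 - m) / ((k + 1 - m)! : ℝ)) := by
      rw [intervalIntegral.integral_congr
        fun y hy => iterInt_eq_sum_of_ge hf c h0 k y (uIcc_of_le hx ▸ hy).1,
        intervalIntegral.integral_finsetSum fun m _ => (by fun_prop : Continuous _).intervalIntegrable _ _]
      refine Finset.sum_congr rfl fun m hm => ?_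
      rw [intervalIntegral.integral_const_mul, integral_sub_pow_div_factorial,
        show k + 1 - m = k - m + 1 by have := (Finset.mem_Icc.1 hm).2; omega]
    rw [iterInt_succ_apply, ← intervalIntegral.integral_add_adjacent_intervals
      (hcont.intervalIntegrable c d) (hcont.intervalIntegrable d x), ← iterInt_succ_apply,
      htail, Finset.sum_Icc_succ_top (by omega)]
    simp [add_comm]

end

theorem stmt5_general (a b : ℝ) (hab : a < b) (n k r i : ℕ) (h ai ai1 : ℝ) (hh : h = (b - a) / n)
    (hai : ai = a + i * h) (f : ℝ → ℝ) (hf : Continuous f) (V : ℕ → ℝ)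
    (hsupp : ∀ x, x ∉ Set.Icc ai ai1 → f x = 0)
    (hval : ∀ m, 1 ≤ m → iterInt f ai m ai1 = h ^ (r + m) * V m) :
    ∀ x, ai1 < x → x ≤ b →
      iterInt f a k x
        = ∑ m ∈ Finset.Icc 1 k,
            h ^ (r + m) / ((k - m).factorial : ℝ) * V m * (x - ai1) ^ (k - m) := by
  intro x hx _
  have hh0 : 0 ≤ h := hh ▸ div_nonneg (sub_nonneg.2 hab.le) n.cast_nonneg
  have ha : a ≤ ai := hai ▸ le_add_of_nonneg_right (mul_nonneg i.cast_nonneg hh0)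
  rw [iterInt_eq_iterInt_of_le hf ha (fun _ => hf.eq_zero_of_le_of_forall_notMem_Icc hsupp),
    iterInt_eq_sum_of_ge hf ai (fun _ => hf.eq_zero_of_ge_of_forall_notMem_Icc hsupp) k x hx.le]
  refine Finset.sum_congr rfl fun m hm => ?_
  rw [hval m (Finset.mem_Icc.1 hm).1]
  ring

theorem stmt5 (a b : ℝ) (hab : a < b) (n k r i : ℕ) (hn : 1 ≤ n) (hk : 1 ≤ k) (hr : 1 ≤ r)
    (hi : i < n) (h ai ai1 : ℝ) (hh : h = (b - a) / n) (hai : ai = a + i * h)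
    (hai1 : ai1 = a + (i + 1) * h) (f : ℝ → ℝ) (hf : Continuous f) (V : ℕ → ℝ)
    (hsupp : ∀ x, x ∉ Set.Icc ai ai1 → f x = 0)
    (hval : ∀ m, 1 ≤ m → iterInt f ai m ai1 = h ^ (r + m) * V m) :
    ∀ x, ai1 < x → x ≤ b →
      iterInt f a k x
        = ∑ m ∈ Finset.Icc 1 k,
            h ^ (r + m) / ((k - m).factorial : ℝ) * V m * (x - ai1) ^ (k - m) :=
  stmt5_general a b hab n k r i h ai ai1 hh hai f hf V hsupp hval
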